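/- Let Λ : M_d(ℂ) → M_d(ℂ) be a linear map such that for every t ≥ 0 the map exp(tΛ) is trace-preserving and positive (maps positive semidefinite matrices to positive semidefinite matrices). Then every eigenvalue λ ∈ ℂ of Λ satisfies Re(λ) ≤ 0. -/

import Mathlib

/-!
If `Re λ > 0` and `Λ X = λ X` with `X i j ≠ 0`, the entry `(exp (tΛ) X) i j = e^{tλ} X i j`
is unbounded as `t → ∞`. But for positive semidefinite `A`, the matrix `exp (tΛ) A` is again
positive semidefinite with trace `tr A`, so its entries are bounded by `tr A`; since positive
semidefinite matrices span `M_d(ℂ)`, every entry orbit `t ↦ (exp (tΛ) Y) i j` is bounded.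
-/

open Matrix Filter
open scoped ComplexOrder

attribute [local instance] Matrix.frobeniusNormedAddCommGroup Matrix.frobeniusNormedSpace

/-- `exp (t Λ)` as a map on matrices. -/
noncomputable def expL {d : ℕ}
    (L : Matrix (Fin d) (Fin d) ℂ →ₗ[ℂ] Matrix (Fin d) (Fin d) ℂ) (t : ℝ) :
    Matrix (Fin d) (Fin d) ℂ →L[ℂ] Matrix (Fin d) (Fin d) ℂ :=
  haveI : IsTopologicalRing (Matrix (Fin d) (Fin d) ℂ →L[ℂ] Matrix (Fin d) (Fin d) ℂ) :=
    @NonUnitalSeminormedRing.toIsTopologicalRing _ (@ContinuousLinearMap.toNormedRing ℂ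
      (Matrix (Fin d) (Fin d) ℂ) Matrix.frobeniusNormedAddCommGroup _
      Matrix.frobeniusNormedSpace).toNonUnitalNormedRing.toNonUnitalSeminormedRing
  NormedSpace.exp ((t : ℂ) • LinearMap.toContinuousLinearMap L)

open Asymptotics

theorem NormedSpace.exp_apply_of_apply_eq_smul {𝕂 E : Type*} [RCLike 𝕂] [NormedAddCommGroup E]
    [NormedSpace 𝕂 E] [CompleteSpace E] {T : E →L[𝕂] E} {μ : 𝕂} {x : E} (h : T x = μ • x) :
    exp T x = exp μ • x := by
  have hpow : ∀ n : ℕ, (T ^ n) x = μ ^ n • x := fun n ↦ by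
    induction n with
    | zero => simp
    | succ n ih => rw [pow_succ', mul_apply_eq_comp, ih, map_smul, h, smul_smul, pow_succ]
  have hT := (exp_series_hasSum_exp' (𝕂 := 𝕂) T).mapL (ContinuousLinearMap.apply 𝕂 E x)
  have hμ := (exp_series_hasSum_exp' (𝕂 := 𝕂) μ).smul_const x
  simp only [ContinuousLinearMap.apply_apply, _root_.smul_apply, hpow, smul_smul] at hT
  exact hT.unique (by simpa only [smul_eq_mul] using hμ)

theorem Complex.re_nonpos_of_isBigO_exp_mul {μ : ℂ}
    (h : (fun t : ℝ ↦ Complex.exp (t * μ)) =O[atTop] fun _ ↦ (1 : ℝ)) : μ.re ≤ 0 := by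
  by_contra! hμ
  have hreal : (fun t : ℝ ↦ Real.exp (t * μ.re)) =O[atTop] fun _ ↦ Real.exp 0 := by
    simpa [Complex.norm_exp] using isBigO_norm_left.mpr h
  exact not_isBoundedUnder_of_tendsto_atTop (tendsto_id.atTop_mul_const hμ)
    (by simpa [Pi.sub_def] using Real.isBigO_exp_comp_exp_comp.mp hreal)

section BoundedOrbits

variable {ι 𝕜 E F : Type*} [NormedField 𝕜] [AddCommGroup E] [Module 𝕜 E]
  [SeminormedAddCommGroup F] [NormedSpace 𝕜 F]

def boundedOrbits (T : ι → E →ₗ[𝕜] F) (l : Filter ι) : Submodule 𝕜 E where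
  carrier := {x | (fun i ↦ T i x) =O[l] fun _ ↦ (1 : ℝ)}
  add_mem' hx hy := by simpa only [Set.mem_ofPred_eq, map_add] using hx.add hy
  zero_mem' := by simpa only [Set.mem_ofPred_eq, map_zero] using isBigO_zero _ _
  smul_mem' c x hx := by
    simpa only [Set.mem_ofPred_eq, map_smul, Pi.smul_def] using hx.const_smul_left c

theorem mem_boundedOrbits {T : ι → E →ₗ[𝕜] F} {l : Filter ι} {x : E} :
    x ∈ boundedOrbits T l ↔ (fun i ↦ T i x) =O[l] fun _ ↦ (1 : ℝ) :=
  Iff.rfl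

end BoundedOrbits

namespace Matrix

namespace PosSemidef

variable {n 𝕜 : Type*} [RCLike 𝕜] {Q : Matrix n n 𝕜}

theorem norm_apply_sq_le (hQ : Q.PosSemidef) (i j : n) :
    ‖Q i j‖ ^ 2 ≤ RCLike.re (Q i i) * RCLike.re (Q j j) := by
  have hdet := RCLike.nonneg_iff.mp (hQ.submatrix ![i, j]).det_nonneg |>.1
  have hii := RCLike.nonneg_iff.mp (hQ.diag_nonneg (i := i)) |>.2
  have hjj := RCLike.nonneg_iff.mp (hQ.diag_nonneg (i := j)) |>.2
  simp only [det_fin_two, submatrix_apply, cons_val_zero, cons_val_one] at hdet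
  rw [← hQ.isHermitian.apply j i, RCLike.star_def, RCLike.mul_conj, map_sub, RCLike.mul_re, hii,
    hjj, ← RCLike.ofReal_pow, RCLike.ofReal_re] at hdet
  linarith

theorem re_diag_nonneg (hQ : Q.PosSemidef) (i : n) : 0 ≤ RCLike.re (Q i i) :=
  (RCLike.nonneg_iff.mp hQ.diag_nonneg).1

theorem re_apply_le_re_trace [Fintype n] (hQ : Q.PosSemidef) (i : n) :
    RCLike.re (Q i i) ≤ RCLike.re Q.trace := by
  rw [trace, map_sum]
  exact Finset.single_le_sum (f := fun k ↦ RCLike.re (Q k k)) (fun k _ ↦ hQ.re_diag_nonneg k)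
    (Finset.mem_univ i)

theorem norm_apply_le_re_trace [Fintype n] (hQ : Q.PosSemidef) (i j : n) :
    ‖Q i j‖ ≤ RCLike.re Q.trace := by
  have hi := hQ.re_apply_le_re_trace i
  have hj := hQ.re_apply_le_re_trace j
  have htrace := (hQ.re_diag_nonneg i).trans hi
  refine (pow_le_pow_iff_left₀ (norm_nonneg _) htrace two_ne_zero).mp ?_
  calc ‖Q i j‖ ^ 2 ≤ RCLike.re (Q i i) * RCLike.re (Q j j) := hQ.norm_apply_sq_le i j
    _ ≤ RCLike.re Q.trace ^ 2 := by
      rw [sq]; exact mul_le_mul hi hj (hQ.re_diag_nonneg j) htrace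

end PosSemidef

open scoped MatrixOrder in
theorem boundedOrbits_entry_eq_top {n ι : Type*} [Fintype n] [DecidableEq n]
    {T : ι → Matrix n n ℂ →ₗ[ℂ] Matrix n n ℂ} {l : Filter ι}
    (hpos : ∀ᶠ s in l, ∀ A : Matrix n n ℂ, A.PosSemidef → (T s A).PosSemidef)
    (htrace : ∀ᶠ s in l, ∀ A : Matrix n n ℂ, (T s A).trace = A.trace) (i j : n) :
    boundedOrbits (fun s ↦ entryLinearMap ℂ ℂ i j ∘ₗ T s) l = ⊤ := by
  rw [eq_top_iff, ← CStarAlgebra.span_nonneg, Submodule.span_le]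
  intro A hA
  refine IsBigO.of_bound (RCLike.re A.trace) ?_
  filter_upwards [hpos, htrace] with s hs ht
  simpa [ht] using (hs A (nonneg_iff_posSemidef.mp hA)).norm_apply_le_re_trace i j

end Matrix

theorem expL_apply_of_apply_eq_smul {d : ℕ}
    {Λ : Matrix (Fin d) (Fin d) ℂ →ₗ[ℂ] Matrix (Fin d) (Fin d) ℂ} {lam : ℂ}
    {X : Matrix (Fin d) (Fin d) ℂ} (h : Λ X = lam • X) (t : ℝ) :
    expL Λ t X = Complex.exp (t * lam) • X := by
  rw [Complex.exp_eq_exp_ℂ]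
  refine NormedSpace.exp_apply_of_apply_eq_smul ?_
  change (t : ℂ) • Λ X = _
  rw [h, smul_smul]

theorem stmt16_general (d : ℕ)
    (Λ : Matrix (Fin d) (Fin d) ℂ →ₗ[ℂ] Matrix (Fin d) (Fin d) ℂ)
    (htrace : ∀ t : ℝ, 0 ≤ t → ∀ X : Matrix (Fin d) (Fin d) ℂ,
      (expL Λ t X).trace = X.trace)
    (hpos : ∀ t : ℝ, 0 ≤ t → ∀ A : Matrix (Fin d) (Fin d) ℂ,
      A.PosSemidef → (expL Λ t A).PosSemidef) :
    ∀ lam : ℂ, (∃ X : Matrix (Fin d) (Fin d) ℂ, X ≠ 0 ∧ Λ X = lam • X) → lam.re ≤ 0 := by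
  rintro lam ⟨X, hX0, hXeig⟩
  obtain ⟨i, j, hij⟩ : ∃ i j, X i j ≠ 0 := by
    by_contra! h
    exact hX0 (Matrix.ext h)
  have hbounded : X ∈ boundedOrbits (fun t ↦ entryLinearMap ℂ ℂ i j ∘ₗ (expL Λ t).toLinearMap)
      atTop := by
    rw [boundedOrbits_entry_eq_top ((eventually_ge_atTop 0).mono hpos)
      ((eventually_ge_atTop 0).mono htrace)]
    exact Submodule.mem_top
  rw [mem_boundedOrbits] at hbounded
  simp only [LinearMap.coe_comp, Function.comp_apply, ContinuousLinearMap.coe_coe,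
    entryLinearMap_apply, expL_apply_of_apply_eq_smul hXeig, Matrix.smul_apply, smul_eq_mul]
    at hbounded
  exact Complex.re_nonpos_of_isBigO_exp_mul ((isBigO_const_mul_left_iff hij).mp
    (by simpa only [mul_comm] using hbounded))

theorem stmt16 (d : ℕ) (hd : 1 ≤ d)
    (Λ : Matrix (Fin d) (Fin d) ℂ →ₗ[ℂ] Matrix (Fin d) (Fin d) ℂ)
    (htrace : ∀ t : ℝ, 0 ≤ t → ∀ X : Matrix (Fin d) (Fin d) ℂ,
      (expL Λ t X).trace = X.trace)
    (hpos : ∀ t : ℝ, 0 ≤ t → ∀ A : Matrix (Fin d) (Fin d) ℂ,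
      A.PosSemidef → (expL Λ t A).PosSemidef) :
    ∀ lam : ℂ, (∃ X : Matrix (Fin d) (Fin d) ℂ, X ≠ 0 ∧ Λ X = lam • X) → lam.re ≤ 0 :=
  stmt16_general d Λ htrace hpos
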